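/- arXiv:1110.4060 — 2 statements merged into one kernel-verified Lean document; each statement's English description precedes it below -/
import Mathlib

section
/- Let A be a finite tuple of polytopes indexed by a finite set K, and for J ⊆ K let dim(AJ) denote dim(∑_{j∈J} A(j)) − |J| (where the empty sum is {0}). Then for all I, J ⊆ K, dim(AI) + dim(AJ) ≥ dim(A(I∪J)) + dim(A(I∩J)). -/
/-!
The direction space of a Minkowski sum of nonempty sets is the sum of their direction spaces, so
`J ↦ dim (∑ AJ)` is the rank function `J ↦ dim (⨆ j ∈ J, Lⱼ)` of a family of subspaces, which is
submodular by the modular law `dim (U ⊔ W) + dim (U ⊓ W) = dim U + dim W`. Subtracting the modular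
function `J ↦ |J|` keeps it submodular.
-/

open Pointwise MeasureTheory Metric

noncomputable section

/-- Ambient Euclidean space `ℝⁿ`. -/
abbrev V (n : ℕ) : Type := EuclideanSpace ℝ (Fin n)

/-- Dimension of (the affine span of) a subset of `ℝⁿ`. -/
def affDim {n : ℕ} (s : Set (V n)) : ℕ := Module.finrank ℝ (vectorSpan ℝ s)

/-- A (compact convex) polytope: the convex hull of a nonempty finite set. -/
def IsPolytope {n : ℕ} (P : Set (V n)) : Prop :=
  ∃ F : Finset (V n), F.Nonempty ∧ P = convexHull ℝ (F : Set (V n))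

/-- `dim AJ = dim (∑_{j ∈ J} A j) − |J|` for a tuple of polytopes; the empty
Minkowski sum is `{0}` (the `0` of the pointwise monoid on sets). -/
def tdim {n : ℕ} {K : Type} [Fintype K] (A : K → Set (V n)) (J : Finset K) : ℤ :=
  (affDim (∑ j ∈ J, A j) : ℤ) - J.card

section VectorSpan

variable {k E ι : Type*} [Ring k] [AddCommGroup E] [Module k E]

theorem vectorSpan_add {s t : Set E} (hs : s.Nonempty) (ht : t.Nonempty) :
    vectorSpan k (s + t) = vectorSpan k s ⊔ vectorSpan k t := by
  obtain ⟨a₀, ha₀⟩ := hs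
  obtain ⟨b₀, hb₀⟩ := ht
  refine le_antisymm ?_ (sup_le ?_ ?_)
  · rw [vectorSpan_def, Submodule.span_le]
    rintro _ ⟨_, ⟨a, ha, b, hb, rfl⟩, _, ⟨a', ha', b', hb', rfl⟩, rfl⟩
    simp only [vsub_eq_sub, add_sub_add_comm]
    exact Submodule.add_mem_sup (vsub_mem_vectorSpan k ha ha') (vsub_mem_vectorSpan k hb hb')
  · rw [← vectorSpan_vadd k s b₀]
    exact vectorSpan_mono k (Set.vadd_set_subset_iff.2 fun x hx => by
      simpa [add_comm] using Set.add_mem_add hx hb₀)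
  · rw [← vectorSpan_vadd k t a₀]
    exact vectorSpan_mono k (Set.vadd_set_subset_iff.2 fun x hx => Set.add_mem_add ha₀ hx)

theorem vectorSpan_finsetSum [DecidableEq ι] (A : ι → Set E) {J : Finset ι}
    (hA : ∀ j ∈ J, (A j).Nonempty) :
    vectorSpan k (∑ j ∈ J, A j) = ⨆ j ∈ J, vectorSpan k (A j) := by
  induction J using Finset.induction_on with
  | empty => simp [← Set.singleton_zero]
  | insert i J hi ih =>
    rw [Finset.forall_mem_insert] at hA
    have hJ : (∑ j ∈ J, A j).Nonempty :=
      ⟨_, Set.finsetSum_mem_finsetSum J A (fun j => if h : j ∈ J then (hA.2 j h).some else 0)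
        fun j hj => by simpa [hj] using (hA.2 j hj).some_mem⟩
    rw [Finset.sum_insert hi, vectorSpan_add hA.1 hJ, ih hA.2, Finset.iSup_insert]

end VectorSpan

theorem Submodule.finrank_iSup_union_add_finrank_iSup_inter_le {K E ι : Type*} [DivisionRing K]
    [AddCommGroup E] [Module K E] [FiniteDimensional K E] [DecidableEq ι]
    (f : ι → Submodule K E) (I J : Finset ι) :
    Module.finrank K ↥(⨆ i ∈ I ∪ J, f i) + Module.finrank K ↥(⨆ i ∈ I ∩ J, f i) ≤
      Module.finrank K ↥(⨆ i ∈ I, f i) + Module.finrank K ↥(⨆ i ∈ J, f i) := by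
  rw [Finset.iSup_union, ← Submodule.finrank_sup_add_finrank_inf_eq (⨆ i ∈ I, f i)]
  gcongr
  exact Submodule.finrank_mono <| le_inf (biSup_mono fun _ => Finset.mem_of_mem_inter_left)
    (biSup_mono fun _ => Finset.mem_of_mem_inter_right)

theorem IsPolytope.nonempty {n : ℕ} {P : Set (V n)} (hP : IsPolytope P) : P.Nonempty := by
  obtain ⟨F, hF, rfl⟩ := hP
  exact (Finset.coe_nonempty.2 hF).convexHull

/-- Submodularity of the dimension function of tuples of polytopes. -/
theorem stmt0 {n : ℕ} {K : Type} [Fintype K] [DecidableEq K]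
    (A : K → Set (V n)) (hA : ∀ k, IsPolytope (A k)) (I J : Finset K) :
    tdim A (I ∪ J) + tdim A (I ∩ J) ≤ tdim A I + tdim A J := by
  have hspan (L : Finset K) : vectorSpan ℝ (∑ j ∈ L, A j) = ⨆ j ∈ L, vectorSpan ℝ (A j) :=
    vectorSpan_finsetSum A fun j _ => (hA j).nonempty
  have hdim : affDim (∑ j ∈ I ∪ J, A j) + affDim (∑ j ∈ I ∩ J, A j) ≤
      affDim (∑ j ∈ I, A j) + affDim (∑ j ∈ J, A j) := by
    unfold affDim
    rw [hspan, hspan, hspan, hspan]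
    exact Submodule.finrank_iSup_union_add_finrank_iSup_inter_le _ I J
  have hcard := Finset.card_union_add_card_inter I J
  unfold tdim
  omega

end
end

section
/- In the setting above (K = I ⊔ H, L the orthogonal complement of the span of ∑AI, C the stable intersection of the dual fans of AH): if the stable intersection of L and C is nonempty, then the maximal essential subtuple of A is a subtuple of AI. -/
open Pointwise MeasureTheory Metric

noncomputable section

open scoped RealInnerProductSpace

/-- The integer lattice `ℤⁿ ⊆ ℝⁿ`. -/
def intLattice (n : ℕ) : AddSubgroup (V n) where
  carrier := {x | ∀ i, ∃ m : ℤ, x i = (m : ℝ)}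
  zero_mem' := fun i => ⟨0, by simp⟩
  add_mem' := by
    intro a b ha hb i
    obtain ⟨p, hp⟩ := ha i; obtain ⟨q, hq⟩ := hb i
    exact ⟨p + q, by push_cast; rw [← hp, ← hq]; rfl⟩
  neg_mem' := by
    intro a ha i
    obtain ⟨p, hp⟩ := ha i
    exact ⟨-p, by push_cast; rw [← hp]; rfl⟩

/-- The index `[ℤⁿ : (ℤⁿ ∩ L) + (ℤⁿ ∩ T)]` of the sum of the lattice points of two
subspaces inside the integer lattice. -/
def latticeIndex {n : ℕ} (L T : Submodule ℝ (V n)) : ℕ :=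
  Nat.card (↥(intLattice n) ⧸
    ((intLattice n ⊓ L.toAddSubgroup ⊔ intLattice n ⊓ T.toAddSubgroup).addSubgroupOf
      (intLattice n)))

/-- `x` is a smooth point of `P`: near `x`, the translate `P − x` coincides with a
linear subspace. -/
def IsSmoothPt {n : ℕ} (P : Set (V n)) (x : V n) : Prop :=
  ∃ (L : Submodule ℝ (V n)) (ε : ℝ), 0 < ε ∧
    (fun y => y - x) '' (P ∩ Metric.ball x ε) = (L : Set (V n)) ∩ Metric.ball 0 ε

open Classical in
/-- The tangent space of `P` at a smooth point `x` (junk value `⊥` elsewhere). -/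
def tangentAt {n : ℕ} (P : Set (V n)) (x : V n) : Submodule ℝ (V n) :=
  if h : IsSmoothPt P x then h.choose else ⊥

/-- A rational polyhedron: intersection of finitely many rational half-spaces. -/
def IsRatPolyhedron {n : ℕ} (Q : Set (V n)) : Prop :=
  ∃ s : Finset ((Fin n → ℚ) × ℚ),
    Q = {x | ∀ p ∈ s, (∑ i, (p.1 i : ℝ) * x i) ≤ (p.2 : ℝ)}

/-- A purely `k`-dimensional rational polyhedral complex: a locally finite union of
closed rational `k`-dimensional polyhedra. -/
def IsPolyComplex {n : ℕ} (k : ℕ) (P : Set (V n)) : Prop :=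
  ∃ Fam : Set (Set (V n)), P = ⋃₀ Fam ∧
    (∀ Q ∈ Fam, IsRatPolyhedron Q ∧ Q.Nonempty ∧ affDim Q = k) ∧
    ∀ x : V n, ∃ ε > (0 : ℝ), {Q ∈ Fam | (Q ∩ Metric.ball x ε).Nonempty}.Finite

/-- A rational linear subspace of `ℝⁿ`. -/
def IsRatSubspace {n : ℕ} (L : Submodule ℝ (V n)) : Prop :=
  ∃ s : Finset (Fin n → ℚ),
    L = Submodule.span ℝ ((fun q => (WithLp.toLp 2 (fun i => (q i : ℝ)) : V n)) '' (s : Set (Fin n → ℚ)))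

/-- The tropical intersection number of `P` (with weight `w`) and the translate
`L + x`. -/
def tropWeightSum {n : ℕ} (P : Set (V n)) (w : V n → ℝ) (L : Submodule ℝ (V n))
    (x : V n) : ℝ :=
  ∑ᶠ p ∈ P ∩ ((fun y => y + x) '' (L : Set (V n))),
    w p * (latticeIndex L (tangentAt P p) : ℝ)

/-- A `k`-dimensional tropical complex: a closed, purely `k`-dimensional rational
polyhedral complex admitting a positive locally constant weight function on its smooth
points, for which the tropical intersection number with every translate of every
rational subspace of complementary dimension (whenever it makes sense, i.e. the
intersection is finite and consists of smooth points) does not depend on the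
translation. -/
def IsTropical {n : ℕ} (k : ℕ) (P : Set (V n)) : Prop :=
  IsPolyComplex k P ∧ IsClosed P ∧
  ∃ w : V n → ℝ,
    (∀ x, IsSmoothPt P x → 0 < w x) ∧
    (∀ x, IsSmoothPt P x → ∃ ε > (0 : ℝ), ∀ y ∈ Metric.ball x ε, IsSmoothPt P y → w y = w x) ∧
    ∀ L : Submodule ℝ (V n), IsRatSubspace L → Module.finrank ℝ L = n - k →
      ∃ c : ℝ, ∀ x : V n,
        ((P ∩ ((fun y => y + x) '' (L : Set (V n)))).Finite ∧
          ∀ p ∈ P ∩ ((fun y => y + x) '' (L : Set (V n))), IsSmoothPt P p) →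
        tropWeightSum P w L x = c

/-- The stable intersection of two subsets of `ℝⁿ`. -/
def stableInter {n : ℕ} (P Q : Set (V n)) : Set (V n) :=
  {x | x ∈ P ∩ Q ∧ ∀ ε > (0 : ℝ), ∃ δ > (0 : ℝ), ∀ v : V n, ‖v‖ < δ →
    ∃ y ∈ ((fun z => z + v) '' P) ∩ Q, dist x y < ε}

/-- The support face `Δ^γ` of `Δ` for a covector `γ` (identified with a vector via the
Euclidean structure): the face where `⟪γ, ·⟫` attains its maximum. -/
def suppFaceV {n : ℕ} (g : V n) (Δ : Set (V n)) : Set (V n) :=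
  {x ∈ Δ | ∀ y ∈ Δ, ⟪g, y⟫ ≤ ⟪g, x⟫}

/-- The dual complex (dual fan) of a polytope: all external normal covectors of its
positive-dimensional faces. -/
def dualFan {n : ℕ} (Δ : Set (V n)) : Set (V n) :=
  {g | 1 ≤ affDim (suppFaceV g Δ)}

/-- Iterated stable intersection of a list of sets (the stable intersection of the
empty list is the ambient space). -/
def stableInterList {n : ℕ} : List (Set (V n)) → Set (V n)
  | [] => Set.univ
  | [Q] => Q
  | Q :: l => stableInter Q (stableInterList l)

/-- A subtuple `AJ` is essential if `dim AJ` is the minimum of `dim` over all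
subtuples, and every proper subtuple has strictly bigger `dim`. -/
def Essential {n : ℕ} {K : Type} [Fintype K] (A : K → Set (V n)) (J : Finset K) : Prop :=
  IsLeast (Set.range (tdim A)) (tdim A J) ∧ ∀ I : Finset K, I ⊂ J → tdim A J < tdim A I

/-- `AI` is the maximal essential subtuple of `A`. -/
def MaxEssentialSub {n : ℕ} {K : Type} [Fintype K] (A : K → Set (V n)) (I : Finset K) :
    Prop :=
  Essential A I ∧ ∀ J : Finset K, Essential A J → J ⊆ I

/-! A point of the stable intersection of two finite unions of linear subspaces lies on one
subspace from each union such that the two span the whole space: otherwise a generic small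
perturbation would push the intersection off every pair of pieces through the point. The dual
fan of a polytope `conv F` is covered by the hyperplanes orthogonal to the differences of points
of `F`, so iterating this over `H` and then intersecting with `L` yields, for `h ∈ H`, vectors
`e h ∈ span A h` that are linearly independent and whose span meets `span (∑ AI)` trivially.
Hence adjoining the summands `A t`, `t ∈ J \ I`, to `∑_{J ∩ I} A` raises the dimension by at
least `|J \ I|`, i.e. `dim A(J ∩ I) ≤ dim AJ`, so an essential `J` cannot leave `I`. -/

open Filter Topology Submodule

section StableIntersection

variable {n : ℕ}

lemma stableInter_univ (P : Set (V n)) : stableInter P Set.univ = P := by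
  refine Set.Subset.antisymm (fun x hx => hx.1.1) fun x hx => ⟨⟨hx, trivial⟩, fun ε hε => ?_⟩
  exact ⟨ε, hε, fun v hv => ⟨x + v, ⟨⟨x, hx, rfl⟩, trivial⟩, by rwa [dist_self_add_right]⟩⟩

lemma stableInterList_cons (Q : Set (V n)) (l : List (Set (V n))) :
    stableInterList (Q :: l) = stableInter Q (stableInterList l) := by
  cases l with
  | nil => exact (stableInter_univ Q).symm
  | cons _ _ => rfl

theorem exists_sup_eq_top_of_mem_stableInter {P Q : Set (V n)} {x : V n}
    (hx : x ∈ stableInter P Q) {𝒦₁ 𝒦₂ : Set (Submodule ℝ (V n))} (h𝒦₁ : 𝒦₁.Finite)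
    (h𝒦₂ : 𝒦₂.Finite) (hP : P ⊆ ⋃ K ∈ 𝒦₁, (K : Set (V n)))
    (hQ : Q ⊆ ⋃ K ∈ 𝒦₂, (K : Set (V n))) :
    ∃ K₁ ∈ 𝒦₁, ∃ K₂ ∈ 𝒦₂, x ∈ K₁ ∧ x ∈ K₂ ∧ K₁ ⊔ K₂ = ⊤ := by
  by_contra! hproper
  obtain ⟨u, hu⟩ : ∃ u : V n, ∀ K₁ ∈ 𝒦₁, ∀ K₂ ∈ 𝒦₂, x ∈ K₁ → x ∈ K₂ → u ∉ K₁ ⊔ K₂ := by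
    have := h𝒦₁.to_subtype
    have := h𝒦₂.to_subtype
    by_contra! hcov
    obtain ⟨⟨⟨K₁, K₂⟩, hx₁, hx₂⟩, htop⟩ := Subspace.exists_eq_top_of_iUnion_eq_univ
      (p := fun p : {p : 𝒦₁ × 𝒦₂ // x ∈ p.1.1 ∧ x ∈ p.2.1} => p.1.1.1 ⊔ p.1.2.1)
      (Set.eq_univ_of_forall fun u => by
        obtain ⟨K₁, hK₁, K₂, hK₂, hx₁, hx₂, hu⟩ := hcov u
        exact Set.mem_iUnion.mpr ⟨⟨(⟨K₁, hK₁⟩, ⟨K₂, hK₂⟩), hx₁, hx₂⟩, hu⟩)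
    exact hproper K₁ K₁.2 K₂ K₂.2 hx₁ hx₂ htop
  have hnear : ∀ᶠ y in 𝓝 x, ∀ K ∈ 𝒦₁ ∪ 𝒦₂, y ∈ K → x ∈ K := by
    refine (eventually_all_finite (h𝒦₁.union h𝒦₂)).mpr fun K _ => ?_
    by_cases hK : x ∈ K
    · exact .of_forall fun _ _ => hK
    · filter_upwards [K.closed_of_finiteDimensional.isOpen_compl.mem_nhds hK] with y hy hyK
      exact absurd hyK hy
  obtain ⟨ρ, hρ, hρx⟩ := Metric.eventually_nhds_iff.mp hnear
  obtain ⟨δ, hδ, hstab⟩ := hx.2 (ρ / 2) (half_pos hρ)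
  obtain ⟨t, htu, ht⟩ : ∃ t : ℝ, ‖t • u‖ < min δ (ρ / 2) ∧ t ≠ 0 := by
    have hlim : Tendsto (fun t : ℝ => t • u) (𝓝[≠] 0) (𝓝 0) :=
      ((by fun_prop : Continuous fun t : ℝ => t • u).tendsto' 0 0 (zero_smul ℝ u)).mono_left
        nhdsWithin_le_nhds
    obtain ⟨t, htu, ht⟩ := ((hlim.eventually (Metric.ball_mem_nhds 0
      (lt_min hδ (half_pos hρ)))).and self_mem_nhdsWithin).exists
    exact ⟨t, mem_ball_zero_iff.mp htu, ht⟩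
  obtain ⟨_, ⟨⟨p, hp, rfl⟩, hyQ⟩, hxy⟩ := hstab _ (htu.trans_le (min_le_left _ _))
  obtain ⟨K₁, hK₁, hpK₁⟩ := Set.mem_iUnion₂.mp (hP hp)
  obtain ⟨K₂, hK₂, hyK₂⟩ := Set.mem_iUnion₂.mp (hQ hyQ)
  replace hxy : dist (p + t • u) x < ρ / 2 := by rwa [dist_comm]
  have hy_near : dist (p + t • u) x < ρ := by linarith
  have hp_near : dist p x < ρ := by
    have := dist_triangle p (p + t • u) x
    rw [dist_self_add_right] at this
    linarith [min_le_right δ (ρ / 2)]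
  refine hu K₁ hK₁ K₂ hK₂ (hρx hp_near K₁ (.inl hK₁) hpK₁) (hρx hy_near K₂ (.inr hK₂) hyK₂)
    ((smul_mem_iff _ ht).mp ?_)
  simpa using sub_mem (mem_sup_right hyK₂) (mem_sup_left hpK₁ : p ∈ K₁ ⊔ K₂)

theorem exists_inf_eq_bot_of_mem_stableInter {P Q : Set (V n)} {x : V n}
    (hx : x ∈ stableInter P Q) {𝒦₁ 𝒦₂ : Set (Submodule ℝ (V n))} (h𝒦₁ : 𝒦₁.Finite)
    (h𝒦₂ : 𝒦₂.Finite) (hP : P ⊆ ⋃ K ∈ 𝒦₁, (Kᗮ : Set (V n)))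
    (hQ : Q ⊆ ⋃ K ∈ 𝒦₂, (Kᗮ : Set (V n))) :
    ∃ K₁ ∈ 𝒦₁, ∃ K₂ ∈ 𝒦₂, x ∈ K₁ᗮ ∧ x ∈ K₂ᗮ ∧ K₁ ⊓ K₂ = ⊥ := by
  obtain ⟨_, ⟨K₁, hK₁, rfl⟩, _, ⟨K₂, hK₂, rfl⟩, hx₁, hx₂, htop⟩ :=
    exists_sup_eq_top_of_mem_stableInter hx (h𝒦₁.image fun K : Submodule ℝ (V n) => Kᗮ)
      (h𝒦₂.image fun K : Submodule ℝ (V n) => Kᗮ)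
      (by rwa [Set.biUnion_image]) (by rwa [Set.biUnion_image])
  refine ⟨K₁, hK₁, K₂, hK₂, hx₁, hx₂, ?_⟩
  rw [← K₁.orthogonal_orthogonal, ← K₂.orthogonal_orthogonal, inf_orthogonal, htop,
    top_orthogonal_eq_bot]

end StableIntersection

section DualFan

variable {n : ℕ}

/-- By Krein–Milman a positive-dimensional face of `conv F` has two distinct extreme points;
these are points of `F` on which `⟪·, y⟫` takes the same (maximal) value. -/
theorem exists_mem_sub_inner_eq_zero_of_mem_dualFan {F : Finset (V n)} {y : V n}
    (hy : y ∈ dualFan (convexHull ℝ (F : Set (V n)))) :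
    ∃ e ∈ ((F : Set (V n)) - F) \ {0}, ⟪e, y⟫ = 0 := by
  set C := convexHull ℝ (F : Set (V n))
  set B := suppFaceV y C
  have hB : IsExposed ℝ C B := fun _ =>
    ⟨(innerSL ℝ y : StrongDual ℝ (V n)), by simp [B, suppFaceV]⟩
  have hBcompact : IsCompact B := hB.isCompact (F.finite_toSet.isCompact_convexHull (𝕜 := ℝ))
  have hBconvex : Convex ℝ B := hB.convex (convex_convexHull ℝ _)
  obtain ⟨u, hu, v, hv, huv⟩ : (B.extremePoints ℝ).Nontrivial := by
    refine Set.not_subsingleton_iff.mp fun hsub => ?_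
    have hBsub : B.Subsingleton := by
      rw [← closure_convexHull_extremePoints hBcompact hBconvex, hsub.convex.convexHull_eq]
      exact hsub.closure
    have : affDim B = 0 := by simp [affDim, vectorSpan_of_subsingleton _ hBsub]
    exact absurd hy (by simp [dualFan, B, C, this])
  have hvertex : ∀ w ∈ B.extremePoints ℝ, w ∈ F ∧ w ∈ B := fun w hw =>
    ⟨extremePoints_convexHull_subset (hB.isExtreme.extremePoints_subset_extremePoints hw),
      extremePoints_subset hw⟩
  obtain ⟨huF, huB⟩ := hvertex u hu
  obtain ⟨hvF, hvB⟩ := hvertex v hv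
  refine ⟨u - v, ⟨Set.sub_mem_sub huF hvF, sub_ne_zero.mpr huv⟩, ?_⟩
  rw [inner_sub_left, real_inner_comm y u, real_inner_comm y v]
  linarith [huB.2 v hvB.1, hvB.2 u huB.1]

end DualFan

section Transversal

variable {n : ℕ} {ι : Type*}

def independentTransversalSpans (E : ι → Set (V n)) (s : Set ι) : Set (Submodule ℝ (V n)) :=
  {K | ∃ e : ι → V n, (∀ h ∈ s, e h ∈ E h) ∧ LinearIndepOn ℝ e s ∧ span ℝ (e '' s) = K}

lemma independentTransversalSpans_finite {E : ι → Set (V n)} {s : Set ι} (hs : s.Finite)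
    (hE : ∀ h ∈ s, (E h).Finite) : (independentTransversalSpans E s).Finite := by
  refine ((hs.biUnion hE).finite_subsets.image (span ℝ)).subset ?_
  rintro _ ⟨e, he, -, rfl⟩
  exact ⟨e '' s, by rintro _ ⟨h, hh, rfl⟩; exact Set.mem_biUnion hh (he h hh), rfl⟩

lemma sup_mem_independentTransversalSpans_insert {E : ι → Set (V n)} {s : Set ι} {i : ι}
    (hi : i ∉ s) {e₀ : V n} (he₀ : e₀ ∈ E i) (he₀_ne : e₀ ≠ 0) {K : Submodule ℝ (V n)}
    (hK : K ∈ independentTransversalSpans E s) (htransv : (ℝ ∙ e₀) ⊓ K = ⊥) :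
    (ℝ ∙ e₀) ⊔ K ∈ independentTransversalSpans E (insert i s) := by
  classical
  obtain ⟨e, he, hind, rfl⟩ := hK
  have heq : Set.EqOn (Function.update e i e₀) e s := fun h hh =>
    Function.update_of_ne (ne_of_mem_of_not_mem hh hi) _ _
  refine ⟨Function.update e i e₀, ?_, ?_, ?_⟩
  · rintro h (rfl | hh)
    · rwa [Function.update_self]
    · rw [heq hh]
      exact he h hh
  · refine (hind.congr heq.symm).insert ?_
    rw [Function.update_self, heq.image_eq]
    intro hmem
    have : e₀ ∈ (ℝ ∙ e₀) ⊓ span ℝ (e '' s) := mem_inf.mpr ⟨mem_span_singleton_self e₀, hmem⟩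
    rw [htransv, Submodule.mem_bot] at this
    exact he₀_ne this
  · rw [Set.image_insert_eq, Function.update_self, heq.image_eq, span_insert]

theorem stableInterList_subset_independentTransversalSpans {D E : ι → Set (V n)}
    (hE : ∀ h, (E h).Finite) (hE0 : ∀ h, (0 : V n) ∉ E h)
    (hD : ∀ h, ∀ y ∈ D h, ∃ e ∈ E h, ⟪e, y⟫ = 0) {l : List ι} (hl : l.Nodup) :
    stableInterList (l.map D) ⊆
      ⋃ K ∈ independentTransversalSpans E {h | h ∈ l}, (Kᗮ : Set (V n)) := by
  induction l with
  | nil =>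
    intro z _
    refine Set.mem_iUnion₂.mpr ⟨⊥, ⟨0, by simp, by simp, by simp⟩, by simp⟩
  | cons i l ih =>
    obtain ⟨hi, hl⟩ := List.nodup_cons.mp hl
    intro z hz
    rw [List.map_cons, stableInterList_cons] at hz
    have hDi : D i ⊆ ⋃ K ∈ (fun e => ℝ ∙ e) '' E i, (Kᗮ : Set (V n)) := by
      intro y hy
      obtain ⟨e, he, hey⟩ := hD i y hy
      rw [Set.biUnion_image]
      exact Set.mem_iUnion₂.mpr ⟨e, he, mem_orthogonal_singleton_iff_inner_right.mpr hey⟩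
    obtain ⟨_, ⟨e₀, he₀, rfl⟩, K, hK, hz₀, hzK, htransv⟩ :=
      exists_inf_eq_bot_of_mem_stableInter hz ((hE i).image _)
        (independentTransversalSpans_finite (List.finite_toSet l) fun h _ => hE h) hDi (ih hl)
    have hins : {h | h ∈ i :: l} = insert i {h | h ∈ l} := by ext; simp
    refine Set.mem_iUnion₂.mpr ⟨(ℝ ∙ e₀) ⊔ K, ?_, ?_⟩
    · have := sup_mem_independentTransversalSpans_insert (s := {h | h ∈ l}) hi he₀
        (fun h => hE0 i (h ▸ he₀)) hK htransv
      rwa [← hins] at this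
    · rw [← inf_orthogonal]
      exact ⟨hz₀, hzK⟩

end Transversal

section Dimension

variable {n : ℕ} {ι : Type} [DecidableEq ι]

lemma vectorSpan_sum_mono {A : ι → Set (V n)} (hA : ∀ i, (A i).Nonempty) {S J : Finset ι}
    (hSJ : S ⊆ J) : vectorSpan ℝ (∑ i ∈ S, A i) ≤ vectorSpan ℝ (∑ i ∈ J, A i) := by
  obtain ⟨b, hb⟩ : (∑ i ∈ J \ S, A i).Nonempty :=
    Finset.sum_induction A Set.Nonempty (fun _ _ => .add) Set.zero_nonempty fun i _ => hA i
  rw [← Finset.sum_sdiff hSJ, ← vectorSpan_vadd ℝ _ b]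
  exact vectorSpan_mono ℝ (Set.vadd_set_subset_add hb)

lemma tdim_le_tdim_union [Fintype ι] {A : ι → Set (V n)} (hA : ∀ i, (A i).Nonempty)
    {S T : Finset ι} (hST : Disjoint S T) {e : ι → V n} (he : ∀ t ∈ T, e t ∈ vectorSpan ℝ (A t))
    (hind : LinearIndepOn ℝ e T)
    (htransv : vectorSpan ℝ (∑ i ∈ S, A i) ⊓ span ℝ (e '' T) = ⊥) :
    tdim A S ≤ tdim A (S ∪ T) := by
  have hP : Module.finrank ℝ (span ℝ (e '' T)) = T.card := by
    rw [Set.image_eq_range, finrank_span_eq_card hind]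
    simp
  set U := vectorSpan ℝ (∑ i ∈ S, A i)
  set Z := vectorSpan ℝ (∑ i ∈ S ∪ T, A i)
  set P := span ℝ (e '' T)
  have hUZ : U ≤ Z := vectorSpan_sum_mono hA Finset.subset_union_left
  have hPZ : P ≤ Z := span_le.mpr <| by
    rintro _ ⟨t, ht, rfl⟩
    have : vectorSpan ℝ (A t) ≤ Z := by
      simpa using vectorSpan_sum_mono hA
        (Finset.singleton_subset_iff.mpr (Finset.mem_union_right S ht))
    exact this (he t ht)
  have hdim : Module.finrank ℝ U + T.card ≤ Module.finrank ℝ Z := by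
    calc Module.finrank ℝ U + T.card = Module.finrank ℝ ↥(U ⊔ P) := by
          rw [← hP, ← finrank_sup_add_finrank_inf_eq, htransv, finrank_bot, add_zero]
      _ ≤ Module.finrank ℝ Z := finrank_mono (sup_le hUZ hPZ)
  rw [tdim, tdim, Finset.card_union_of_disjoint hST]
  have : affDim (∑ i ∈ S, A i) + T.card ≤ affDim (∑ i ∈ S ∪ T, A i) := hdim
  push_cast
  omega

lemma Essential.subset_of_tdim_inter_le [Fintype ι] {A : ι → Set (V n)} {I J : Finset ι}
    (hJ : Essential A J) (hle : tdim A (J ∩ I) ≤ tdim A J) : J ⊆ I := by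
  by_contra hJI
  exact (hJ.2 _ (Finset.inter_subset_left.ssubset_of_not_subset fun h =>
    hJI (h.trans Finset.inter_subset_right))).not_ge hle

end Dimension

theorem stmt12_general {n κ : ℕ} (A : Fin κ → Set (V n)) (hA : ∀ i, IsPolytope (A i))
    (I H : Finset (Fin κ)) (hcover : I ∪ H = Finset.univ)
    (hne : (stableInter
      (((vectorSpan ℝ (∑ i ∈ I, A i))ᗮ : Submodule ℝ (V n)) : Set (V n))
      (stableInterList ((H.sort (· ≤ ·)).map (fun h => dualFan (A h))))).Nonempty) :
    ∀ J : Finset (Fin κ), MaxEssentialSub A J → J ⊆ I := by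
  choose F hFne hA using hA
  have hFA : ∀ h, (F h : Set (V n)) ⊆ A h := fun h => (hA h).symm ▸ subset_convexHull ℝ _
  have hAne : ∀ h, (A h).Nonempty := fun h => (hFne h).to_set.mono (hFA h)
  set E : Fin κ → Set (V n) := fun h => ((F h : Set (V n)) - F h) \ {0}
  have hEfin : ∀ h, (E h).Finite := fun h =>
    ((F h).finite_toSet.sub (F h).finite_toSet).sdiff
  have hC := stableInterList_subset_independentTransversalSpans hEfin (fun h he => he.2 rfl)
    (fun h y hy => exists_mem_sub_inner_eq_zero_of_mem_dualFan (hA h ▸ hy))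
    (H.sort_nodup (· ≤ ·))
  obtain ⟨x, hx⟩ := hne
  obtain ⟨_, rfl, _, ⟨e, heE, hind, rfl⟩, -, -, htransv⟩ :=
    exists_inf_eq_bot_of_mem_stableInter hx (Set.finite_singleton (vectorSpan ℝ (∑ i ∈ I, A i)))
      (independentTransversalSpans_finite (List.finite_toSet _) fun h _ => hEfin h) (by simp) hC
  have hsort : {h | h ∈ H.sort (· ≤ ·)} = H := by ext; simp
  rw [hsort] at heE hind htransv
  intro J hJ
  have hJIH : J \ I ⊆ H := fun t ht => by
    have ht' := Finset.mem_univ t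
    rw [← hcover, Finset.mem_union] at ht'
    exact ht'.resolve_left (Finset.mem_sdiff.mp ht).2
  have hle := tdim_le_tdim_union hAne (Finset.disjoint_sdiff_inter J I).symm
    (fun t ht => vectorSpan_mono ℝ (hFA t) (vsub_set_subset_vectorSpan ℝ _ (heE t (hJIH ht)).1))
    (hind.mono hJIH)
    (le_bot_iff.mp (htransv ▸ inf_le_inf (vectorSpan_sum_mono hAne Finset.inter_subset_right)
      (span_mono (Set.image_mono hJIH))))
  rw [Finset.union_comm, Finset.sdiff_union_inter] at hle
  exact hJ.1.subset_of_tdim_inter_le hle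

/-- Proposition 2.9(2): if the stable intersection of the orthogonal complement `L` of
the span of `∑ AI` with the stable intersection `C` of the dual fans of `AH` is
nonempty (`K = I ⊔ H`), then the maximal essential subtuple of `A` is a subtuple
of `AI`. -/
theorem stmt12 {n κ : ℕ} (A : Fin κ → Set (V n)) (hA : ∀ i, IsPolytope (A i))
    (I H : Finset (Fin κ)) (hdisj : Disjoint I H) (hcover : I ∪ H = Finset.univ)
    (hne : (stableInter
      (((vectorSpan ℝ (∑ i ∈ I, A i))ᗮ : Submodule ℝ (V n)) : Set (V n))
      (stableInterList ((H.sort (· ≤ ·)).map (fun h => dualFan (A h))))).Nonempty) :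
    ∀ J : Finset (Fin κ), MaxEssentialSub A J → J ⊆ I :=
  stmt12_general A hA I H hcover hne
end
end
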